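/- For every u ∈ N and every v ∈ V with P⁺v ≠ 0, there exists a unique v₀ ∈ F_u(v) such that (u, v₀) ∈ 𝒩; moreover v₀ is the unique maximizer of E₂(u,·) on F_u(v). -/

import Mathlib

open scoped InnerProductSpace
open Filter Topology Set

/-!
The energy `E = ½ a(v, v) - b(u, v)` is maximized on `F_u(v)` by the direct method: superlevel sets
`{E ≥ δ}`, `δ > 0`, are bounded by the superquadratic growth of `b`, and `E` is weakly upper
semicontinuous on `F_u(v)` because `P⁺` ranges over a half-line there. The first variation along
`V⁻` and along the ray through a maximizer gives the Nehari conditions. Conversely, integrating the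
gradient along rays shows `b(u, v) = Φ(|v|)` with `Φ(r) = ∫₀^r f(u, τ) τ dτ`; as `r ↦ Φ(√r)` is
strictly convex, every Nehari point `x` of `F_u(v)` satisfies `E(y) < E(x)` for all other `y` in
`F_u(v)`. Hence the Nehari point is unique and is the strict maximizer.
-/

section WeakConvergence

variable {V : Type*} [NormedAddCommGroup V] [InnerProductSpace ℝ V]

def TendstoWeakly (x : ℕ → V) (z : V) : Prop :=
  ∀ y : V, Tendsto (fun n => ⟪x n, y⟫_ℝ) atTop (𝓝 ⟪z, y⟫_ℝ)

/-- Sequential Banach–Alaoglu, applied in the separable closed span of the sequence. -/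
theorem exists_strictMono_tendstoWeakly [CompleteSpace V] {x : ℕ → V} {C : ℝ}
    (hC : ∀ n, ‖x n‖ ≤ C) : ∃ z φ, StrictMono φ ∧ TendstoWeakly (x ∘ φ) z := by
  set K := (Submodule.span ℝ (range x)).topologicalClosure
  have : TopologicalSpace.SeparableSpace K := by
    have : TopologicalSpace.IsSeparable (K : Set V) := by
      rw [Submodule.topologicalClosure_coe]
      exact (countable_range x).isSeparable.span.closure
    exact this.separableSpace
  have : CompleteSpace K := (Submodule.isClosed_topologicalClosure _).completeSpace_coe
  have hxK : ∀ n, x n ∈ K := fun n =>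
    Submodule.le_topologicalClosure _ (Submodule.subset_span (mem_range_self n))
  let ℓ : ℕ → WeakDual ℝ K := fun n =>
    WeakDual.toStrongDual.symm (InnerProductSpace.toDual ℝ K ⟨x n, hxK n⟩)
  have hℓ : ∀ n, ℓ n ∈ WeakDual.toStrongDual ⁻¹' Metric.closedBall 0 C := fun n => by
    rw [mem_preimage, LinearEquiv.apply_symm_apply]
    exact mem_closedBall_zero_iff.mpr
      ((LinearIsometryEquiv.norm_map (InnerProductSpace.toDual ℝ K) ⟨x n, hxK n⟩).trans_le (hC n))
  obtain ⟨ℓ₀, -, φ, hφ, hlim⟩ := WeakDual.isSeqCompact_closedBall ℝ K 0 C hℓ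
  set z := (InnerProductSpace.toDual ℝ K).symm (WeakDual.toStrongDual ℓ₀)
  refine ⟨z, φ, hφ, fun y => ?_⟩
  have hℓy : ∀ n, ⟪x n, y⟫_ℝ = ℓ n (K.orthogonalProjectionOnto y) := fun n =>
    (Submodule.inner_orthogonalProjectionOnto_eq_of_mem_left ⟨x n, hxK n⟩ y).symm
  rw [← Submodule.inner_orthogonalProjectionOnto_eq_of_mem_left,
    InnerProductSpace.toDual_symm_apply]
  simp only [Function.comp_apply, hℓy]
  exact ((WeakDual.eval_continuous _).tendsto ℓ₀).comp hlim

theorem TendstoWeakly.map [CompleteSpace V] {x : ℕ → V} {z : V} (h : TendstoWeakly x z)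
    (T : V →L[ℝ] V) : TendstoWeakly (fun n => T (x n)) (T z) := fun y => by
  simpa only [ContinuousLinearMap.adjoint_inner_right] using h (T.adjoint y)

theorem TendstoWeakly.eq_of_tendsto {x : ℕ → V} {z z' : V} (h : TendstoWeakly x z)
    (h' : Tendsto x atTop (𝓝 z')) : z = z' :=
  ext_inner_right ℝ fun y =>
    tendsto_nhds_unique (h y) (((continuous_id.inner continuous_const).tendsto z').comp h')

theorem TendstoWeakly.norm_sq_le {x : ℕ → V} {z : V} {L : ℝ} (h : TendstoWeakly x z)
    (hL : Tendsto (fun n => ‖x n‖ ^ 2) atTop (𝓝 L)) : ‖z‖ ^ 2 ≤ L := by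
  have hle : ∀ n, ⟪x n, z⟫_ℝ ≤ (‖x n‖ ^ 2 + ‖z‖ ^ 2) / 2 := fun n => by
    nlinarith [real_inner_le_norm (x n) z, sq_nonneg (‖x n‖ - ‖z‖)]
  have := le_of_tendsto_of_tendsto' (h z) ((hL.add_const _).div_const 2) hle
  rw [real_inner_self_eq_norm_sq] at this
  linarith

end WeakConvergence

section RadialPrimitive

variable {g : ℝ → ℝ}

/-- Writing `Φ r = ∫₀^r g τ τ dτ`, the map `s ↦ Φ (√s)` has derivative `g (√s) / 2`, so it is
strictly convex when `g` is strictly increasing; this is its tangent inequality at `r₁ ^ 2`. -/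
theorem integral_mul_id_gt_tangent (hg_cont : ContinuousOn g (Ici 0))
    (hg_mono : StrictMonoOn g (Ici 0)) {r₁ r₂ : ℝ} (h₁ : 0 ≤ r₁) (h₂ : 0 ≤ r₂) (hne : r₁ ≠ r₂) :
    g r₁ * ((r₂ ^ 2 - r₁ ^ 2) / 2) + ∫ τ in (0 : ℝ)..r₁, g τ * τ
      < ∫ τ in (0 : ℝ)..r₂, g τ * τ := by
  have hint : ∀ {a b : ℝ}, 0 ≤ a → 0 ≤ b →
      IntervalIntegrable (fun τ => g τ * τ) MeasureTheory.volume a b := fun ha hb =>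
    ((hg_cont.mul continuousOn_id).mono (ordConnected_Ici.uIcc_subset ha hb)).intervalIntegrable
  have hsplit : ∫ τ in r₁..r₂, (g τ - g r₁) * τ
      = (∫ τ in (0 : ℝ)..r₂, g τ * τ) - (∫ τ in (0 : ℝ)..r₁, g τ * τ)
        - g r₁ * ((r₂ ^ 2 - r₁ ^ 2) / 2) := by
    simp only [sub_mul]
    rw [intervalIntegral.integral_sub (hint h₁ h₂)
        ((continuous_const_mul (g r₁)).intervalIntegrable _ _),
      intervalIntegral.integral_interval_sub_left (hint le_rfl h₂) (hint le_rfl h₁),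
      intervalIntegral.integral_const_mul, integral_id]
  have hcont : ContinuousOn (fun τ => (g τ - g r₁) * τ) (uIcc r₁ r₂) :=
    ((hg_cont.sub continuousOn_const).mul continuousOn_id).mono (ordConnected_Ici.uIcc_subset h₁ h₂)
  suffices 0 < ∫ τ in r₁..r₂, (g τ - g r₁) * τ by linarith
  rcases hne.lt_or_gt with hlt | hgt
  · refine intervalIntegral.intervalIntegral_pos_of_pos_on hcont.intervalIntegrable
      (fun τ hτ => ?_) hlt
    exact mul_pos (sub_pos.2 (hg_mono h₁ (h₁.trans hτ.1.le) hτ.1)) (h₁.trans_lt hτ.1)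
  · rw [intervalIntegral.integral_symm, neg_pos, ← neg_pos, ← intervalIntegral.integral_neg]
    refine intervalIntegral.intervalIntegral_pos_of_pos_on hcont.intervalIntegrable.symm.neg
      (fun τ hτ => ?_) hgt
    have := hg_mono (h₂.trans hτ.1.le) h₁ hτ.2
    nlinarith [h₂.trans_lt hτ.1]

theorem integral_mul_id_le (hg_cont : ContinuousOn g (Ici 0)) (hg_mono : StrictMonoOn g (Ici 0))
    {r : ℝ} (hr : 0 ≤ r) : ∫ τ in (0 : ℝ)..r, g τ * τ ≤ g r * r ^ 2 / 2 := by
  rcases hr.eq_or_lt with rfl | hr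
  · simp
  · have := integral_mul_id_gt_tangent hg_cont hg_mono hr.le le_rfl hr.ne'
    simp only [intervalIntegral.integral_same] at this
    linarith

variable {V W : Type*} [NormedAddCommGroup V] [InnerProductSpace ℝ V]
  [NormedAddCommGroup W] [InnerProductSpace ℝ W]

/-- Integrate the gradient along the segment `[0, y]` and substitute `τ = s ‖ι y‖`. -/
theorem eq_integral_of_fderiv_eq (ι : V →L[ℝ] W) {B : V → ℝ} (hB : Differentiable ℝ B)
    (hB0 : B 0 = 0) (hg : ContinuousOn g (Ici 0))
    (hgrad : ∀ v h, fderiv ℝ B v h = g ‖ι v‖ * ⟪ι v, ι h⟫_ℝ) (y : V) :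
    B y = ∫ τ in (0 : ℝ)..‖ι y‖, g τ * τ := by
  set r := ‖ι y‖
  have hderiv : ∀ s ∈ uIcc (0 : ℝ) 1,
      HasDerivAt (fun s : ℝ => B (s • y)) (r * (g (r * s) * (r * s))) s := by
    intro s hs
    have hs0 : 0 ≤ s := ordConnected_Ici.uIcc_subset le_rfl zero_le_one hs
    refine ((hB (s • y)).hasFDerivAt.comp_hasDerivAt s
      ((hasDerivAt_id s).smul_const y)).congr_deriv ?_
    rw [one_smul, hgrad, map_smul, norm_smul, real_inner_smul_left, real_inner_self_eq_norm_sq,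
      Real.norm_eq_abs, abs_of_nonneg hs0, mul_comm r s]
    ring
  have hcont : ContinuousOn (fun s => r * (g (r * s) * (r * s))) (uIcc 0 1) := by
    refine continuousOn_const.mul ((hg.comp (continuous_const.mul continuous_id).continuousOn
      fun s hs => ?_).mul (continuous_const.mul continuous_id).continuousOn)
    exact mul_nonneg (norm_nonneg _) (ordConnected_Ici.uIcc_subset le_rfl zero_le_one hs)
  calc B y = ∫ s in (0 : ℝ)..1, r * (g (r * s) * (r * s)) := by
        rw [intervalIntegral.integral_eq_sub_of_hasDerivAt hderiv hcont.intervalIntegrable]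
        simp [hB0]
    _ = ∫ τ in (0 : ℝ)..r, g τ * τ := by
        rw [intervalIntegral.integral_const_mul]
        simpa using intervalIntegral.smul_integral_comp_mul_left (a := 0) (b := 1)
          (fun τ => g τ * τ) r

end RadialPrimitive

section Splitting

variable {V : Type*} [NormedAddCommGroup V] [InnerProductSpace ℝ V]

structure IsOrthogonalSplitting (Pp Pm : V →L[ℝ] V) : Prop where
  pos_add_neg : ∀ v, Pp v + Pm v = v
  pos_idem : ∀ v, Pp (Pp v) = Pp v
  inner_pos_neg : ∀ v w, ⟪Pp v, Pm w⟫_ℝ = 0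

namespace IsOrthogonalSplitting

variable {Pp Pm : V →L[ℝ] V}

theorem pos_apply_eq_zero (hP : IsOrthogonalSplitting Pp Pm) {w : V} (hw : Pm w = w) :
    Pp w = 0 := by
  simpa [hw] using hP.pos_add_neg w

theorem neg_apply_eq_self (hP : IsOrthogonalSplitting Pp Pm) {w : V} (hw : Pp w = 0) :
    Pm w = w := by
  simpa [hw] using hP.pos_add_neg w

theorem neg_apply_pos_apply (hP : IsOrthogonalSplitting Pp Pm) (v : V) : Pm (Pp v) = 0 := by
  simpa [hP.pos_idem] using hP.pos_add_neg (Pp v)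

theorem norm_sq_eq (hP : IsOrthogonalSplitting Pp Pm) (z : V) :
    ‖z‖ ^ 2 = ‖Pp z‖ ^ 2 + ‖Pm z‖ ^ 2 := by
  conv_lhs => rw [← hP.pos_add_neg z]
  rw [norm_add_sq_real, hP.inner_pos_neg]
  ring

end IsOrthogonalSplitting

variable {a : V →L[ℝ] V →L[ℝ] ℝ} {Pp Pm : V →L[ℝ] V}

theorem apply_self_eq_of_eq_inner (ha : ∀ v w, a v w = ⟪Pp v, Pp w⟫_ℝ - ⟪Pm v, Pm w⟫_ℝ)
    (z : V) : a z z = ‖Pp z‖ ^ 2 - ‖Pm z‖ ^ 2 := by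
  rw [ha, real_inner_self_eq_norm_sq, real_inner_self_eq_norm_sq]

theorem apply_comm_of_eq_inner (ha : ∀ v w, a v w = ⟪Pp v, Pp w⟫_ℝ - ⟪Pm v, Pm w⟫_ℝ)
    (v w : V) : a v w = a w v := by
  rw [ha, ha, real_inner_comm (Pp v), real_inner_comm (Pm v)]

theorem apply_self_le_of_eq_inner (hP : IsOrthogonalSplitting Pp Pm)
    (ha : ∀ v w, a v w = ⟪Pp v, Pp w⟫_ℝ - ⟪Pm v, Pm w⟫_ℝ) (z : V) : a z z ≤ ‖z‖ ^ 2 := by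
  rw [apply_self_eq_of_eq_inner ha, hP.norm_sq_eq z]
  linarith [sq_nonneg ‖Pm z‖]

theorem norm_sq_lt_of_apply_self_pos (hP : IsOrthogonalSplitting Pp Pm)
    (ha : ∀ v w, a v w = ⟪Pp v, Pp w⟫_ℝ - ⟪Pm v, Pm w⟫_ℝ) {z : V} (hz : 0 < a z z) :
    ‖z‖ ^ 2 < 2 * ‖Pp z‖ ^ 2 := by
  rw [apply_self_eq_of_eq_inner ha] at hz
  rw [hP.norm_sq_eq z]
  linarith

/-- The set `ℝ₊ v ⊕ V⁻`, written `F_u(v)` in the paper. -/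
def fiber (Pm : V →L[ℝ] V) (v : V) : Set V :=
  {x | ∃ (t : ℝ) (w : V), 0 ≤ t ∧ Pm w = w ∧ x = t • v + w}

variable {v x : V}

theorem smul_mem_fiber (hx : x ∈ fiber Pm v) {s : ℝ} (hs : 0 ≤ s) : s • x ∈ fiber Pm v := by
  obtain ⟨t, w, ht, hw, rfl⟩ := hx
  exact ⟨s * t, s • w, mul_nonneg hs ht, by rw [map_smul, hw], by rw [smul_add, smul_smul]⟩

theorem add_mem_fiber (hx : x ∈ fiber Pm v) {w : V} (hw : Pm w = w) : x + w ∈ fiber Pm v := by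
  obtain ⟨t, w', ht, hw', rfl⟩ := hx
  exact ⟨t, w' + w, ht, by rw [map_add, hw, hw'], by rw [add_assoc]⟩

namespace IsOrthogonalSplitting

theorem mem_fiber_iff (hP : IsOrthogonalSplitting Pp Pm) :
    x ∈ fiber Pm v ↔ ∃ t : ℝ, 0 ≤ t ∧ Pp x = t • Pp v := by
  constructor
  · rintro ⟨t, w, ht, hw, rfl⟩
    exact ⟨t, ht, by rw [map_add, map_smul, hP.pos_apply_eq_zero hw, add_zero]⟩
  · rintro ⟨t, ht, hx⟩
    refine ⟨t, x - t • v, ht, hP.neg_apply_eq_self ?_, by abel⟩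
    rw [map_sub, map_smul, hx, sub_self]

theorem exists_eq_smul_add_of_mem_fiber (hP : IsOrthogonalSplitting Pp Pm)
    (hx : x ∈ fiber Pm v) (hPx : Pp x ≠ 0) {y : V} (hy : y ∈ fiber Pm v) :
    ∃ s : ℝ, 0 ≤ s ∧ ∃ w, Pm w = w ∧ y = s • x + w := by
  obtain ⟨t, w, ht, hw, rfl⟩ := hx
  obtain ⟨t', w', ht', hw', rfl⟩ := hy
  have ht0 : t ≠ 0 := by
    rintro rfl
    simp [hP.pos_apply_eq_zero hw] at hPx
  refine ⟨t' / t, div_nonneg ht' ht, w' - (t' / t) • w, by rw [map_sub, map_smul, hw, hw'], ?_⟩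
  rw [smul_add, smul_smul, div_mul_cancel₀ t' ht0]
  abel

end IsOrthogonalSplitting

end Splitting

section Energy

variable {V W : Type*} [NormedAddCommGroup V] [InnerProductSpace ℝ V]
  [NormedAddCommGroup W] [InnerProductSpace ℝ W]
  {a : V →L[ℝ] V →L[ℝ] ℝ} {Pp Pm : V →L[ℝ] V} {B : V → ℝ} {g : ℝ → ℝ} {v x : V}

noncomputable def energy (a : V →L[ℝ] V →L[ℝ] ℝ) (B : V → ℝ) (x : V) : ℝ :=
  1 / 2 * a x x - B x

/-- The generalized Nehari condition, for `∇B v = g ‖ι v‖ • ι* ι v`. -/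
def IsNehari (ι : V →L[ℝ] W) (Pp Pm : V →L[ℝ] V) (a : V →L[ℝ] V →L[ℝ] ℝ) (g : ℝ → ℝ)
    (x : V) : Prop :=
  Pp x ≠ 0 ∧ a x x = g ‖ι x‖ * ⟪ι x, ι x⟫_ℝ ∧
    ∀ φ : V, Pm φ = φ → a x φ = g ‖ι x‖ * ⟪ι x, ι φ⟫_ℝ

theorem hasDerivAt_energy_add_smul (ha : ∀ v w, a v w = ⟪Pp v, Pp w⟫_ℝ - ⟪Pm v, Pm w⟫_ℝ)
    (hB : DifferentiableAt ℝ B x) (h : V) :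
    HasDerivAt (fun s : ℝ => energy a B (x + s • h)) (a x h - fderiv ℝ B x h) 0 := by
  have hline : HasDerivAt (fun s : ℝ => x + s • h) h 0 := by
    simpa using ((hasDerivAt_id (0 : ℝ)).smul_const h).const_add x
  have hquad : HasDerivAt (fun s : ℝ => a (x + s • h) (x + s • h)) (a h x + a x h) 0 := by
    simpa using (a.hasFDerivAt.comp_hasDerivAt 0 hline).clm_apply hline
  have hB' : HasDerivAt (fun s : ℝ => B (x + s • h)) (fderiv ℝ B x h) 0 :=
    hB.hasFDerivAt.comp_hasDerivAt_of_eq 0 hline (by simp)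
  refine ((hquad.const_mul (1 / 2)).sub hB').congr_deriv ?_
  rw [apply_comm_of_eq_inner ha h x]
  ring

theorem apply_eq_fderiv_of_isMaxOn (ha : ∀ v w, a v w = ⟪Pp v, Pp w⟫_ℝ - ⟪Pm v, Pm w⟫_ℝ)
    (hB : DifferentiableAt ℝ B x) {S : Set V} (hmax : IsMaxOn (energy a B) S x) {h : V}
    (hS : ∀ᶠ s in 𝓝 (0 : ℝ), x + s • h ∈ S) : a x h = fderiv ℝ B x h := by
  have hloc : IsLocalMax (fun s : ℝ => energy a B (x + s • h)) 0 :=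
    hS.mono fun s hs => by simpa using isMaxOn_iff.mp hmax _ hs
  exact sub_eq_zero.mp (hloc.hasDerivAt_eq_zero (hasDerivAt_energy_add_smul ha hB h))

/-- Vary `x` along `V⁻` and along its own ray. -/
theorem isNehari_of_isMaxOn (ι : V →L[ℝ] W)
    (ha : ∀ v w, a v w = ⟪Pp v, Pp w⟫_ℝ - ⟪Pm v, Pm w⟫_ℝ) (hB : Differentiable ℝ B)
    (hgrad : ∀ v h, fderiv ℝ B v h = g ‖ι v‖ * ⟪ι v, ι h⟫_ℝ) (hxF : x ∈ fiber Pm v)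
    (hPx : Pp x ≠ 0) (hmax : IsMaxOn (energy a B) (fiber Pm v) x) : IsNehari ι Pp Pm a g x := by
  refine ⟨hPx, ?_, fun φ hφ => ?_⟩
  · rw [← hgrad]
    refine apply_eq_fderiv_of_isMaxOn ha (hB x) hmax ?_
    filter_upwards [eventually_ge_nhds neg_one_lt_zero] with s hs
    rw [show x + s • x = (1 + s) • x by rw [add_smul, one_smul]]
    exact smul_mem_fiber hxF (by linarith)
  · rw [← hgrad]
    exact apply_eq_fderiv_of_isMaxOn ha (hB x) hmax
      (Eventually.of_forall fun s => add_mem_fiber hxF (by rw [map_smul, hφ]))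

theorem energy_smul_add_lt {ι : V →L[ℝ] W} (hι : Function.Injective ι)
    (hP : IsOrthogonalSplitting Pp Pm) (ha : ∀ v w, a v w = ⟪Pp v, Pp w⟫_ℝ - ⟪Pm v, Pm w⟫_ℝ)
    (hg_cont : ContinuousOn g (Ici 0)) (hg_mono : StrictMonoOn g (Ici 0))
    (hg_nonneg : ∀ t, 0 ≤ t → 0 ≤ g t) (hB : ∀ y, B y = ∫ τ in (0 : ℝ)..‖ι y‖, g τ * τ)
    (hx : IsNehari ι Pp Pm a g x) {s : ℝ} (hs : 0 ≤ s) {w : V} (hw : Pm w = w)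
    (hne : s • x + w ≠ x) : energy a B (s • x + w) < energy a B x := by
  obtain ⟨hPx, hxx, hxφ⟩ := hx
  have hr₁ : 0 < ‖ι x‖ :=
    norm_pos_iff.2 fun h => hPx (by rw [hι (h.trans (map_zero ι).symm), map_zero])
  have hr₂ : ‖ι (s • x + w)‖ ^ 2 = s ^ 2 * ‖ι x‖ ^ 2 + 2 * s * ⟪ι x, ι w⟫_ℝ + ‖ι w‖ ^ 2 := by
    rw [map_add, map_smul, norm_add_sq_real, norm_smul, real_inner_smul_left, Real.norm_eq_abs,
      abs_of_nonneg hs]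
    ring
  have hww : a w w = -‖w‖ ^ 2 := by
    rw [apply_self_eq_of_eq_inner ha, hP.pos_apply_eq_zero hw, hw, norm_zero]
    ring
  have hyy : a (s • x + w) (s • x + w) = s ^ 2 * a x x + 2 * s * a x w + a w w := by
    simp only [map_add, map_smul, add_apply, smul_apply, smul_eq_mul]
    rw [apply_comm_of_eq_inner ha w x]
    ring
  have hkey : energy a B (s • x + w) - energy a B x
      = (g ‖ι x‖ * ((‖ι (s • x + w)‖ ^ 2 - ‖ι x‖ ^ 2) / 2) + B x - B (s • x + w))
        - (g ‖ι x‖ * ‖ι w‖ ^ 2 + ‖w‖ ^ 2) / 2 := by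
    simp only [energy]
    rw [hyy, hww, hxφ w hw, hxx, real_inner_self_eq_norm_sq, hr₂]
    ring
  have hgw : 0 ≤ g ‖ι x‖ * ‖ι w‖ ^ 2 := mul_nonneg (hg_nonneg _ hr₁.le) (sq_nonneg _)
  rcases eq_or_ne ‖ι x‖ ‖ι (s • x + w)‖ with hr | hr
  · have hw0 : w ≠ 0 := by
      rintro rfl
      rw [add_zero, map_smul, norm_smul, Real.norm_eq_abs, abs_of_nonneg hs] at hr
      have hs1 : s = 1 := by nlinarith
      exact hne (by rw [hs1, one_smul, add_zero])
    have hBeq : B (s • x + w) = B x := by rw [hB, hB, hr]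
    have : 0 < ‖w‖ ^ 2 := by positivity
    rw [hBeq, ← hr, sub_self] at hkey
    linarith
  · have := integral_mul_id_gt_tangent hg_cont hg_mono (norm_nonneg _) (norm_nonneg _) hr
    rw [← hB, ← hB] at this
    nlinarith [sq_nonneg ‖w‖]

theorem energy_lt_of_isNehari {ι : V →L[ℝ] W} (hι : Function.Injective ι)
    (hP : IsOrthogonalSplitting Pp Pm) (ha : ∀ v w, a v w = ⟪Pp v, Pp w⟫_ℝ - ⟪Pm v, Pm w⟫_ℝ)
    (hg_cont : ContinuousOn g (Ici 0)) (hg_mono : StrictMonoOn g (Ici 0))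
    (hg_nonneg : ∀ t, 0 ≤ t → 0 ≤ g t) (hB : ∀ y, B y = ∫ τ in (0 : ℝ)..‖ι y‖, g τ * τ)
    (hx : IsNehari ι Pp Pm a g x) (hxF : x ∈ fiber Pm v) {y : V} (hyF : y ∈ fiber Pm v)
    (hne : y ≠ x) : energy a B y < energy a B x := by
  obtain ⟨s, hs, w, hw, rfl⟩ := hP.exists_eq_smul_add_of_mem_fiber hxF hx.1 hyF
  exact energy_smul_add_lt hι hP ha hg_cont hg_mono hg_nonneg hB hx hs hw hne

end Energy

section Existence

variable {V : Type*} [NormedAddCommGroup V] [InnerProductSpace ℝ V]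
  {a : V →L[ℝ] V →L[ℝ] ℝ} {Pp Pm : V →L[ℝ] V} {B : V → ℝ} {v : V}

theorem TendstoWeakly.mem_fiber_and_tendsto_pos_apply [CompleteSpace V] {z : V} {x : ℕ → V}
    (hx : TendstoWeakly x z) (hP : IsOrthogonalSplitting Pp Pm) (hv : Pp v ≠ 0)
    (hxF : ∀ n, x n ∈ fiber Pm v) :
    z ∈ fiber Pm v ∧ Tendsto (fun n => Pp (x n)) atTop (𝓝 (Pp z)) := by
  choose t ht hPx using fun n => hP.mem_fiber_iff.1 (hxF n)
  have hv2 : ⟪Pp v, Pp v⟫_ℝ ≠ 0 := inner_self_ne_zero.2 hv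
  set t₀ := ⟪Pp z, Pp v⟫_ℝ / ⟪Pp v, Pp v⟫_ℝ
  have htt : Tendsto t atTop (𝓝 t₀) := by
    have := ((hx.map Pp) (Pp v)).div_const ⟪Pp v, Pp v⟫_ℝ
    simp only [hPx, real_inner_smul_left, mul_div_cancel_right₀ _ hv2] at this
    exact this
  have hlim : Tendsto (fun n => Pp (x n)) atTop (𝓝 (t₀ • Pp v)) := by
    simpa only [hPx] using htt.smul_const (Pp v)
  have hz : Pp z = t₀ • Pp v := (hx.map Pp).eq_of_tendsto hlim
  exact ⟨hP.mem_fiber_iff.2 ⟨t₀, ge_of_tendsto' htt ht, hz⟩, hz ▸ hlim⟩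

/-- The witness is `t • P⁺ v` for small `t > 0`: `B (t • y) ≤ g (t ‖ι y‖) t² ‖ι y‖² / 2` and
`g` vanishes at `0`. -/
theorem exists_energy_pos {W : Type*} [NormedAddCommGroup W] [InnerProductSpace ℝ W]
    {ι : V →L[ℝ] W} {g : ℝ → ℝ} (hP : IsOrthogonalSplitting Pp Pm)
    (ha : ∀ v w, a v w = ⟪Pp v, Pp w⟫_ℝ - ⟪Pm v, Pm w⟫_ℝ) (hv : Pp v ≠ 0)
    (hg_cont : ContinuousOn g (Ici 0)) (hg_mono : StrictMonoOn g (Ici 0)) (hg_zero : g 0 = 0)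
    (hB : ∀ y, B y = ∫ τ in (0 : ℝ)..‖ι y‖, g τ * τ) :
    ∃ x ∈ fiber Pm v, 0 < energy a B x := by
  set r := ‖ι (Pp v)‖
  have hp : 0 < ‖Pp v‖ ^ 2 := by positivity
  have hlim : Tendsto (fun t => g (t * r) * r ^ 2) (𝓝[>] 0) (𝓝 0) := by
    have hr : Tendsto (fun t => t * r) (𝓝[>] 0) (𝓝[Ici 0] 0) :=
      tendsto_nhdsWithin_iff.2
        ⟨by simpa using ((continuous_mul_const r).tendsto 0).mono_left nhdsWithin_le_nhds,
          eventually_nhdsWithin_of_forall fun t ht => mul_nonneg (le_of_lt ht) (norm_nonneg _)⟩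
    simpa [hg_zero] using ((hg_cont 0 self_mem_Ici).tendsto.comp hr).mul_const (r ^ 2)
  obtain ⟨t, ht_small, ht_mem⟩ :=
    ((hlim.eventually (gt_mem_nhds hp)).and self_mem_nhdsWithin).exists
  have ht : 0 < t := ht_mem
  refine ⟨t • Pp v, hP.mem_fiber_iff.2 ⟨t, ht.le, by rw [map_smul, hP.pos_idem]⟩, ?_⟩
  have haa : a (t • Pp v) (t • Pp v) = t ^ 2 * ‖Pp v‖ ^ 2 := by
    simp only [map_smul, smul_apply, smul_eq_mul, apply_self_eq_of_eq_inner ha, hP.pos_idem,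
      hP.neg_apply_pos_apply, norm_zero]
    ring
  have hBt : B (t • Pp v) ≤ g (t * r) * (t * r) ^ 2 / 2 := by
    rw [hB, map_smul, norm_smul, Real.norm_eq_abs, abs_of_pos ht]
    exact integral_mul_id_le hg_cont hg_mono (by positivity)
  simp only [energy, haa]
  nlinarith [mul_lt_mul_of_pos_left ht_small (by positivity : (0 : ℝ) < t ^ 2)]

/-- Along an unbounded sequence the normalized weak limit is either `0`, which is impossible since
`P⁺` converges strongly on `F_u(v)` while `a x x > 0` keeps `‖P⁺ x‖ ≥ ‖x‖ / √2`, or nonzero,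
which contradicts the superquadratic growth of `B`. -/
theorem exists_norm_le_of_le_energy [CompleteSpace V] (hP : IsOrthogonalSplitting Pp Pm)
    (ha : ∀ v w, a v w = ⟪Pp v, Pp w⟫_ℝ - ⟪Pm v, Pm w⟫_ℝ) (hv : Pp v ≠ 0)
    (hB_nonneg : ∀ y, 0 ≤ B y)
    (hB_super : ∀ (x : ℕ → V) (z : V), z ≠ 0 → TendstoWeakly x z →
      ∀ s : ℕ → ℝ, Tendsto s atTop atTop →
        Tendsto (fun n => B (s n • x n) / s n ^ 2) atTop atTop)
    {δ : ℝ} (hδ : 0 < δ) : ∃ R, ∀ x ∈ fiber Pm v, δ ≤ energy a B x → ‖x‖ ≤ R := by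
  by_contra! h
  choose y hyF hyE hy using fun k : ℕ => h k
  have hy_pos : ∀ k, 0 < ‖y k‖ := fun k => (Nat.cast_nonneg k).trans_lt (hy k)
  have hBa : ∀ k, 2 * B (y k) < a (y k) (y k) := fun k => by
    have := hyE k
    simp only [energy] at this
    linarith
  set z := fun k => ‖y k‖⁻¹ • y k
  have hz_norm : ∀ k, ‖z k‖ = 1 := fun k => by
    simp [z, norm_smul, inv_mul_cancel₀ (hy_pos k).ne']
  have hyz : ∀ k, ‖y k‖ • z k = y k := fun k => by
    simp [z, smul_smul, mul_inv_cancel₀ (hy_pos k).ne']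
  obtain ⟨zl, ψ, hψ, hzψ⟩ := exists_strictMono_tendstoWeakly fun k => (hz_norm k).le
  rcases eq_or_ne zl 0 with rfl | hzl
  · have hzF : ∀ k, z (ψ k) ∈ fiber Pm v := fun k =>
      smul_mem_fiber (hyF (ψ k)) (inv_nonneg.2 (norm_nonneg _))
    have hPz := ((hzψ.mem_fiber_and_tendsto_pos_apply hP hv hzF).2).norm
    simp only [map_zero, norm_zero] at hPz
    have hPz_large : ∀ k, 1 / 2 < ‖Pp (z k)‖ := fun k => by
      have hazz : 0 < a (z k) (z k) := by
        have hay : 0 < a (y k) (y k) := by linarith [hB_nonneg (y k), hBa k]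
        have hinv := inv_pos.2 (hy_pos k)
        simp only [z, map_smul, smul_apply, smul_eq_mul]
        exact mul_pos hinv (mul_pos hinv hay)
      have := norm_sq_lt_of_apply_self_pos hP ha hazz
      nlinarith [hz_norm k, norm_nonneg (Pp (z k))]
    obtain ⟨k, hk⟩ := (hPz.eventually (gt_mem_nhds (by norm_num : (0 : ℝ) < 1 / 2))).exists
    exact (hPz_large (ψ k)).not_gt hk
  · have hs : Tendsto (fun k => ‖y (ψ k)‖) atTop atTop :=
      tendsto_atTop_mono (fun k => (Nat.cast_le.2 (hψ.id_le k)).trans (hy (ψ k)).le)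
        tendsto_natCast_atTop_atTop
    have hsuper := hB_super _ zl hzl hzψ _ hs
    simp only [Function.comp_apply, hyz] at hsuper
    obtain ⟨k, hk⟩ := (hsuper.eventually_gt_atTop (1 / 2)).exists
    rw [lt_div_iff₀ (pow_pos (hy_pos _) 2)] at hk
    linarith [hBa (ψ k), apply_self_le_of_eq_inner hP ha (y (ψ k))]

/-- `P⁺` converges strongly on `F_u(v)`, `B` is weakly continuous and `‖P⁻ x‖²` is weakly lower
semicontinuous. -/
theorem le_energy_of_tendstoWeakly [CompleteSpace V] (hP : IsOrthogonalSplitting Pp Pm)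
    (ha : ∀ v w, a v w = ⟪Pp v, Pp w⟫_ℝ - ⟪Pm v, Pm w⟫_ℝ) (hv : Pp v ≠ 0)
    (hB_wcont : ∀ (x : ℕ → V) (z : V), TendstoWeakly x z →
      Tendsto (fun n => B (x n)) atTop (𝓝 (B z)))
    {x : ℕ → V} {z : V} {M : ℝ} (hxF : ∀ n, x n ∈ fiber Pm v) (hx : TendstoWeakly x z)
    (hE : Tendsto (fun n => energy a B (x n)) atTop (𝓝 M)) :
    z ∈ fiber Pm v ∧ M ≤ energy a B z := by
  obtain ⟨hzF, hPx⟩ := hx.mem_fiber_and_tendsto_pos_apply hP hv hxF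
  have hPm : Tendsto (fun n => ‖Pm (x n)‖ ^ 2) atTop (𝓝 (‖Pp z‖ ^ 2 - 2 * B z - 2 * M)) := by
    have hPm_eq : ∀ n, ‖Pm (x n)‖ ^ 2
        = ‖Pp (x n)‖ ^ 2 - 2 * B (x n) - 2 * energy a B (x n) := fun n => by
      simp only [energy, apply_self_eq_of_eq_inner ha]
      ring
    simp only [hPm_eq]
    exact ((hPx.norm.pow 2).sub ((hB_wcont x z hx).const_mul 2)).sub (hE.const_mul 2)
  have := (hx.map Pm).norm_sq_le hPm
  refine ⟨hzF, ?_⟩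
  simp only [energy, apply_self_eq_of_eq_inner ha]
  linarith

theorem exists_isMaxOn_energy [CompleteSpace V] (hP : IsOrthogonalSplitting Pp Pm)
    (ha : ∀ v w, a v w = ⟪Pp v, Pp w⟫_ℝ - ⟪Pm v, Pm w⟫_ℝ) (hv : Pp v ≠ 0)
    (hB_nonneg : ∀ y, 0 ≤ B y)
    (hB_wcont : ∀ (x : ℕ → V) (z : V), TendstoWeakly x z →
      Tendsto (fun n => B (x n)) atTop (𝓝 (B z)))
    (hB_super : ∀ (x : ℕ → V) (z : V), z ≠ 0 → TendstoWeakly x z →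
      ∀ s : ℕ → ℝ, Tendsto s atTop atTop →
        Tendsto (fun n => B (s n • x n) / s n ^ 2) atTop atTop)
    (hpos : ∃ x ∈ fiber Pm v, 0 < energy a B x) :
    ∃ x₀ ∈ fiber Pm v, Pp x₀ ≠ 0 ∧ IsMaxOn (energy a B) (fiber Pm v) x₀ := by
  obtain ⟨xp, hxpF, hδ⟩ := hpos
  set δ := energy a B xp
  set K := {x | x ∈ fiber Pm v ∧ δ ≤ energy a B x}
  obtain ⟨R, hR⟩ := exists_norm_le_of_le_energy hP ha hv hB_nonneg hB_super hδ
  have hbdd : BddAbove (energy a B '' K) := by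
    refine ⟨R ^ 2 / 2, ?_⟩
    rintro _ ⟨x, hxK, rfl⟩
    have hx := pow_le_pow_left₀ (norm_nonneg x) (hR x hxK.1 hxK.2) 2
    have := apply_self_le_of_eq_inner hP ha x
    simp only [energy]
    linarith [hB_nonneg x]
  have hxpK : xp ∈ K := ⟨hxpF, le_rfl⟩
  have hδM : δ ≤ sSup (energy a B '' K) := le_csSup hbdd (mem_image_of_mem _ hxpK)
  obtain ⟨e, -, he, heK⟩ := exists_seq_tendsto_sSup ⟨_, mem_image_of_mem _ hxpK⟩ hbdd
  choose x hxK hxe using heK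
  obtain ⟨x₀, ψ, hψ, hx₀⟩ := exists_strictMono_tendstoWeakly fun n => hR _ (hxK n).1 (hxK n).2
  have hE : Tendsto (fun k => energy a B (x (ψ k))) atTop (𝓝 (sSup (energy a B '' K))) := by
    simp only [hxe]
    exact he.comp hψ.tendsto_atTop
  obtain ⟨hx₀F, hM⟩ :=
    le_energy_of_tendstoWeakly hP ha hv hB_wcont (fun k => (hxK (ψ k)).1) hx₀ hE
  have hmax : IsMaxOn (energy a B) (fiber Pm v) x₀ := isMaxOn_iff.2 fun y hy => by
    by_cases hyδ : δ ≤ energy a B y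
    · exact (le_csSup hbdd ⟨y, ⟨hy, hyδ⟩, rfl⟩).trans hM
    · linarith
  refine ⟨x₀, hx₀F, fun h0 => ?_, hmax⟩
  have : energy a B x₀ ≤ 0 := by
    simp only [energy, apply_self_eq_of_eq_inner ha, h0, norm_zero]
    nlinarith [hB_nonneg x₀, sq_nonneg ‖Pm x₀‖]
  linarith

end Existence

theorem stmt_8_general
    {W : Type*} [NormedAddCommGroup W] [InnerProductSpace ℝ W]
    {V : Type*} [NormedAddCommGroup V] [InnerProductSpace ℝ V] [CompleteSpace V]
    (ι : V →L[ℝ] W) (hι : Function.Injective ι)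
    (Pp Pm : V →L[ℝ] V)
    (hP_sum : ∀ v : V, Pp v + Pm v = v)
    (hPp_idem : ∀ v : V, Pp (Pp v) = Pp v)
    (hP_orth : ∀ v w : V, ⟪Pp v, Pm w⟫_ℝ = 0)
    (a : V →L[ℝ] V →L[ℝ] ℝ)
    (ha : ∀ v w : V, a v w = ⟪Pp v, Pp w⟫_ℝ - ⟪Pm v, Pm w⟫_ℝ)
    {N : Type*} [NormedAddCommGroup N] [InnerProductSpace ℝ N]
    (b : N → V → ℝ) (f : N → ℝ → ℝ)
    (hb_C2 : ContDiff ℝ 2 (fun q : N × V => b q.1 q.2))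
    (hb_zero : ∀ u : N, b u 0 = 0)
    (hb_nonneg : ∀ (u : N) (v : V), 0 ≤ b u v)
    (hf_cont : ContinuousOn (fun q : N × ℝ => f q.1 q.2) (Set.univ ×ˢ Set.Ici (0:ℝ)))
    (hf_zero : ∀ u : N, f u 0 = 0)
    (hf_mono : ∀ u : N, StrictMonoOn (f u) (Set.Ici (0:ℝ)))
    (hf_nonneg : ∀ (u : N) (t : ℝ), 0 ≤ t → 0 ≤ f u t)
    (hgrad : ∀ (u : N) (v h : V), fderiv ℝ (b u) v h = f u ‖ι v‖ * ⟪ι v, ι h⟫_ℝ)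
    (hb_wcont : ∀ (u : N) (vseq : ℕ → V) (v : V),
      (∀ y : V, Tendsto (fun n => ⟪vseq n, y⟫_ℝ) atTop (𝓝 ⟪v, y⟫_ℝ)) →
      Tendsto (fun n => b u (vseq n)) atTop (𝓝 (b u v)))
    (hb_super : ∀ (u : N) (vseq : ℕ → V) (v : V), v ≠ 0 →
      (∀ y : V, Tendsto (fun n => ⟪vseq n, y⟫_ℝ) atTop (𝓝 ⟪v, y⟫_ℝ)) →
      ∀ s : ℕ → ℝ, Tendsto s atTop atTop →
      Tendsto (fun n => b u (s n • vseq n) / (s n) ^ 2) atTop atTop)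
    :
    ∀ (u : N) (v : V), Pp v ≠ 0 →
      ∃ v₀ : V,
        (∃ (t : ℝ) (w : V), 0 ≤ t ∧ Pm w = w ∧ v₀ = t • v + w) ∧
        (Pp v₀ ≠ 0 ∧ a v₀ v₀ = f u ‖ι v₀‖ * ⟪ι v₀, ι v₀⟫_ℝ ∧
          ∀ φ : V, Pm φ = φ → a v₀ φ = f u ‖ι v₀‖ * ⟪ι v₀, ι φ⟫_ℝ) ∧
        (∀ x : V, (∃ (t : ℝ) (w : V), 0 ≤ t ∧ Pm w = w ∧ x = t • v + w) →
          (Pp x ≠ 0 ∧ a x x = f u ‖ι x‖ * ⟪ι x, ι x⟫_ℝ ∧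
            ∀ φ : V, Pm φ = φ → a x φ = f u ‖ι x‖ * ⟪ι x, ι φ⟫_ℝ) → x = v₀) ∧
        (∀ x : V, (∃ (t : ℝ) (w : V), 0 ≤ t ∧ Pm w = w ∧ x = t • v + w) → x ≠ v₀ →
          (1/2 : ℝ) * a x x - b u x < (1/2 : ℝ) * a v₀ v₀ - b u v₀) := by
  intro u v hv
  have hP : IsOrthogonalSplitting Pp Pm := ⟨hP_sum, hPp_idem, hP_orth⟩
  have hg_cont : ContinuousOn (f u) (Ici 0) :=
    hf_cont.comp (continuous_const.prodMk continuous_id).continuousOn fun _ hτ => ⟨mem_univ _, hτ⟩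
  have hB_diff : Differentiable ℝ (b u) :=
    (hb_C2.comp (contDiff_const.prodMk contDiff_id)).differentiable two_ne_zero
  have hB := eq_integral_of_fderiv_eq ι hB_diff (hb_zero u) hg_cont (hgrad u)
  obtain ⟨x₀, hx₀F, hPx₀, hmax⟩ := exists_isMaxOn_energy hP ha hv (hb_nonneg u) (hb_wcont u)
    (hb_super u) (exists_energy_pos hP ha hv hg_cont (hf_mono u) (hf_zero u) hB)
  have hN := isNehari_of_isMaxOn ι ha hB_diff (hgrad u) hx₀F hPx₀ hmax
  have hlt : ∀ x ∈ fiber Pm v, x ≠ x₀ → energy a (b u) x < energy a (b u) x₀ :=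
    fun x hxF hne => energy_lt_of_isNehari hι hP ha hg_cont (hf_mono u) (hf_nonneg u) hB hN hx₀F
      hxF hne
  refine ⟨x₀, hx₀F, hN, fun x hxF hxN => ?_, hlt⟩
  by_contra hne
  exact lt_asymm (hlt x hxF hne) (energy_lt_of_isNehari hι hP ha hg_cont (hf_mono u) (hf_nonneg u)
    hB hxN hxF hx₀F (Ne.symm hne))

theorem stmt_8
    {W : Type*} [NormedAddCommGroup W] [InnerProductSpace ℝ W] [CompleteSpace W]
    {V : Type*} [NormedAddCommGroup V] [InnerProductSpace ℝ V] [CompleteSpace V]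
    (ι : V →L[ℝ] W) (hι : Function.Injective ι)
    (c : ℝ) (hc : 0 < c) (hιc : ∀ v : V, ‖ι v‖ ≤ c * ‖v‖)
    (Pp Pm : V →L[ℝ] V)
    (hP_sum : ∀ v : V, Pp v + Pm v = v)
    (hPp_idem : ∀ v : V, Pp (Pp v) = Pp v)
    (hPm_idem : ∀ v : V, Pm (Pm v) = Pm v)
    (hP_orth : ∀ v w : V, ⟪Pp v, Pm w⟫_ℝ = 0)
    (a : V →L[ℝ] V →L[ℝ] ℝ)
    (ha : ∀ v w : V, a v w = ⟪Pp v, Pp w⟫_ℝ - ⟪Pm v, Pm w⟫_ℝ)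
    {N : Type*} [NormedAddCommGroup N] [InnerProductSpace ℝ N] [CompleteSpace N]
    (p : ℝ) (hp : 1 < p)
    (b : N → V → ℝ) (f : N → ℝ → ℝ)
    (hb_C2 : ContDiff ℝ 2 (fun q : N × V => b q.1 q.2))
    (hb_zero : ∀ u : N, b u 0 = 0)
    (hb_nonneg : ∀ (u : N) (v : V), 0 ≤ b u v)
    (hf_cont : ContinuousOn (fun q : N × ℝ => f q.1 q.2) (Set.univ ×ˢ Set.Ici (0:ℝ)))
    (hf_zero : ∀ u : N, f u 0 = 0)
    (hf_mono : ∀ u : N, StrictMonoOn (f u) (Set.Ici (0:ℝ)))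
    (hf_nonneg : ∀ (u : N) (t : ℝ), 0 ≤ t → 0 ≤ f u t)
    (hgrad : ∀ (u : N) (v h : V), fderiv ℝ (b u) v h = f u ‖ι v‖ * ⟪ι v, ι h⟫_ℝ)
    (hb_wcont : ∀ (u : N) (vseq : ℕ → V) (v : V),
      (∀ y : V, Tendsto (fun n => ⟪vseq n, y⟫_ℝ) atTop (𝓝 ⟪v, y⟫_ℝ)) →
      Tendsto (fun n => b u (vseq n)) atTop (𝓝 (b u v)))
    (hb_super : ∀ (u : N) (vseq : ℕ → V) (v : V), v ≠ 0 →
      (∀ y : V, Tendsto (fun n => ⟪vseq n, y⟫_ℝ) atTop (𝓝 ⟪v, y⟫_ℝ)) →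
      ∀ s : ℕ → ℝ, Tendsto s atTop atTop →
      Tendsto (fun n => b u (s n • vseq n) / (s n) ^ 2) atTop atTop)
    :
    ∀ (u : N) (v : V), Pp v ≠ 0 →
      ∃ v₀ : V,
        (∃ (t : ℝ) (w : V), 0 ≤ t ∧ Pm w = w ∧ v₀ = t • v + w) ∧
        (Pp v₀ ≠ 0 ∧ a v₀ v₀ = f u ‖ι v₀‖ * ⟪ι v₀, ι v₀⟫_ℝ ∧
          ∀ φ : V, Pm φ = φ → a v₀ φ = f u ‖ι v₀‖ * ⟪ι v₀, ι φ⟫_ℝ) ∧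
        (∀ x : V, (∃ (t : ℝ) (w : V), 0 ≤ t ∧ Pm w = w ∧ x = t • v + w) →
          (Pp x ≠ 0 ∧ a x x = f u ‖ι x‖ * ⟪ι x, ι x⟫_ℝ ∧
            ∀ φ : V, Pm φ = φ → a x φ = f u ‖ι x‖ * ⟪ι x, ι φ⟫_ℝ) → x = v₀) ∧
        (∀ x : V, (∃ (t : ℝ) (w : V), 0 ≤ t ∧ Pm w = w ∧ x = t • v + w) → x ≠ v₀ →
          (1/2 : ℝ) * a x x - b u x < (1/2 : ℝ) * a v₀ v₀ - b u v₀) :=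
  stmt_8_general ι hι Pp Pm hP_sum hPp_idem hP_orth a ha b f hb_C2 hb_zero hb_nonneg hf_cont hf_zero
    hf_mono hf_nonneg hgrad hb_wcont hb_super
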